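/- With b := J(s_b) and I₁ : [b, ∞) → [s_b, ∞) the inverse of the restriction of J to [s_b, ∞), the function I₁ is differentiable on (b, ∞), the improper integral ∫_b^∞ (I₁′(x)/I₁(x) − 1/x) dx converges, and its value is log(b/(c1·s_b)); equivalently, −∫_b^∞ (I₁′(x)/I₁(x) − 1/x) dx = log(c1·s_b/b). -/

import Mathlib

/-!
On `(b, ∞)` the integrand is the derivative of `F x = log (I₁ x) - log x`, and `I₁` is
differentiable there by the inverse function theorem, since `J' > 0` on `(s_b, ∞)`. Writing
`x = J(s)`, `F' ≥ 0` amounts to `s J'(s) ≤ J(s)`, so `F` is monotone with a finite limit and the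
integral converges to `F(∞) - F(b)`. Here `F(b) = log s_b - log b`, and `F(∞) = -log c1` because
`I₁ → ∞` and `J(s)/s → c1`.
-/

open MeasureTheory

/-- The map `J(s; c0, c1) = (c1*s + c0) * ((s+1)/s)^(1/θ)` for real `s`,
using the real power of the positive quantity `(s+1)/s`. -/
noncomputable def Jmap (θ c0 c1 s : ℝ) : ℝ :=
  (c1 * s + c0) * ((s + 1) / s) ^ (1 / θ)

/-- `s_b = (1−θ)/(2θ) + (1/(2θ))·√(4θ·(c0/c1) + (1−θ)²)`. -/
noncomputable def sB (θ r : ℝ) : ℝ :=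
  (1 - θ) / (2 * θ) + 1 / (2 * θ) * Real.sqrt (4 * θ * r + (1 - θ) ^ 2)

open Set Filter Topology

namespace StrictMonoOn

variable {α β : Type*} [LinearOrder α] [LinearOrder β] {f : α → β} {g : β → α} {a : α}

theorem leftInvOn_of_rightInvOn_Ici (hf : StrictMonoOn f (Ici a))
    (hg : MapsTo g (Ici (f a)) (Ici a)) (hfg : RightInvOn g f (Ici (f a))) :
    LeftInvOn g f (Ici a) := fun t ht =>
  have hft : f t ∈ Ici (f a) := (hf.le_iff_le self_mem_Ici ht).2 ht
  hf.injOn (hg hft) ht (hfg hft)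

theorem strictMonoOn_of_rightInvOn_Ici (hf : StrictMonoOn f (Ici a))
    (hg : MapsTo g (Ici (f a)) (Ici a)) (hfg : RightInvOn g f (Ici (f a))) :
    StrictMonoOn g (Ici (f a)) := fun x hx y hy hxy => by
  rwa [← hf.lt_iff_lt (hg hx) (hg hy), hfg hx, hfg hy]

theorem image_Ici_of_rightInvOn_Ici (hf : StrictMonoOn f (Ici a))
    (hg : MapsTo g (Ici (f a)) (Ici a)) (hfg : RightInvOn g f (Ici (f a))) :
    g '' Ici (f a) = Ici a := by
  refine hg.image_subset.antisymm fun t ht => ⟨f t, (hf.le_iff_le self_mem_Ici ht).2 ht, ?_⟩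
  exact hf.leftInvOn_of_rightInvOn_Ici hg hfg ht

theorem lt_of_rightInvOn_Ici (hf : StrictMonoOn f (Ici a))
    (hg : MapsTo g (Ici (f a)) (Ici a)) (hfg : RightInvOn g f (Ici (f a)))
    {y : β} (hy : f a < y) : a < g y := by
  have hga : g (f a) = a := hf.leftInvOn_of_rightInvOn_Ici hg hfg self_mem_Ici
  rw [← hga]
  exact hf.strictMonoOn_of_rightInvOn_Ici hg hfg self_mem_Ici hy.le hy

theorem tendsto_atTop_of_rightInvOn_Ici (hf : StrictMonoOn f (Ici a))
    (hg : MapsTo g (Ici (f a)) (Ici a)) (hfg : RightInvOn g f (Ici (f a))) :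
    Tendsto g atTop atTop := by
  have : Nonempty β := ⟨f a⟩
  refine tendsto_atTop_atTop.2 fun M => ⟨f (max M a), fun y hy => ?_⟩
  have hmax : max M a ∈ Ici a := le_max_right M a
  have hfmax : f (max M a) ∈ Ici (f a) := (hf.le_iff_le self_mem_Ici hmax).2 hmax
  calc M ≤ max M a := le_max_left M a
    _ = g (f (max M a)) := (hf.leftInvOn_of_rightInvOn_Ici hg hfg hmax).symm
    _ ≤ g y := (hf.strictMonoOn_of_rightInvOn_Ici hg hfg).monotoneOn hfmax
        (le_trans hfmax hy) hy

variable [TopologicalSpace α] [OrderTopology α] [TopologicalSpace β] [OrderTopology β]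

theorem continuousAt_of_rightInvOn_Ici [DenselyOrdered α] (hf : StrictMonoOn f (Ici a))
    (hg : MapsTo g (Ici (f a)) (Ici a)) (hfg : RightInvOn g f (Ici (f a)))
    {y : β} (hy : f a < y) : ContinuousAt g y := by
  refine (hf.strictMonoOn_of_rightInvOn_Ici hg hfg).continuousAt_of_image_mem_nhds
    (Ici_mem_nhds hy) ?_
  rw [hf.image_Ici_of_rightInvOn_Ici hg hfg]
  exact Ici_mem_nhds (hf.lt_of_rightInvOn_Ici hg hfg hy)

theorem continuousWithinAt_Ici_of_rightInvOn_Ici (hf : StrictMonoOn f (Ici a))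
    (hg : MapsTo g (Ici (f a)) (Ici a)) (hfg : RightInvOn g f (Ici (f a))) :
    ContinuousWithinAt g (Ici (f a)) (f a) := by
  refine (hf.strictMonoOn_of_rightInvOn_Ici hg hfg).continuousWithinAt_right_of_surjOn
    self_mem_nhdsWithin ?_
  rw [hf.leftInvOn_of_rightInvOn_Ici hg hfg self_mem_Ici]
  intro t ht
  exact ⟨f t, (hf.le_iff_le self_mem_Ici (mem_Ici.2 ht.out.le)).2 ht.out.le,
    hf.leftInvOn_of_rightInvOn_Ici hg hfg (mem_Ici.2 ht.out.le)⟩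

end StrictMonoOn

theorem StrictMonoOn.hasDerivAt_of_rightInvOn_Ici {f g : ℝ → ℝ} {f' : ℝ → ℝ} {a y : ℝ}
    (hf : StrictMonoOn f (Ici a)) (hg : MapsTo g (Ici (f a)) (Ici a))
    (hfg : RightInvOn g f (Ici (f a))) (hy : f a < y)
    (hderiv : HasDerivAt f (f' (g y)) (g y)) (hne : f' (g y) ≠ 0) :
    HasDerivAt g (f' (g y))⁻¹ y :=
  hderiv.of_local_left_inverse (hf.continuousAt_of_rightInvOn_Ici hg hfg hy) hne <|
    eventually_of_mem (Ici_mem_nhds hy) fun _ hz => hfg hz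

open Real

theorem integrableOn_Ioi_deriv_div_sub_inv {g g' : ℝ → ℝ} {b L : ℝ} (hb : 0 < b)
    (hpos : ∀ x ∈ Ici b, 0 < g x) (hcont : ContinuousWithinAt g (Ici b) b)
    (hderiv : ∀ x ∈ Ioi b, HasDerivAt g (g' x) x)
    (hnonneg : ∀ x ∈ Ioi b, 0 ≤ g' x / g x - 1 / x)
    (hlim : Tendsto (fun x => log (g x) - log x) atTop (𝓝 L)) :
    IntegrableOn (fun x => g' x / g x - 1 / x) (Ioi b) ∧
      ∫ x in Ioi b, (g' x / g x - 1 / x) = L - (log (g b) - log b) := by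
  have hFcont : ContinuousWithinAt (fun x => log (g x) - log x) (Ici b) b :=
    (hcont.log (hpos b self_mem_Ici).ne').sub (continuousAt_log hb.ne').continuousWithinAt
  have hFderiv : ∀ x ∈ Ioi b, HasDerivAt (fun x => log (g x) - log x) (g' x / g x - 1 / x) x :=
    fun x hx => by
      rw [one_div]
      exact ((hderiv x hx).log (hpos x (mem_Ici_of_Ioi hx)).ne').sub
        (hasDerivAt_log (hb.trans hx).ne')
  exact ⟨integrableOn_Ioi_deriv_of_nonneg hFcont hFderiv hnonneg hlim,
    integral_Ioi_of_hasDerivAt_of_nonneg hFcont hFderiv hnonneg hlim⟩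

section Quadratic

variable {θ r : ℝ}

theorem two_mul_mul_sB (hθ : 0 < θ) :
    2 * θ * sB θ r = (1 - θ) + √(4 * θ * r + (1 - θ) ^ 2) := by
  unfold sB; field_simp

theorem sB_quadratic_eq_zero (hθ : 0 < θ) (hr : 0 ≤ r) :
    θ * sB θ r ^ 2 + (θ - 1) * sB θ r - r = 0 := by
  have hsq := sq_sqrt (by positivity : (0 : ℝ) ≤ 4 * θ * r + (1 - θ) ^ 2)
  have h2 := two_mul_mul_sB (r := r) hθ
  have hscaled : (2 * θ) ^ 2 * (θ * sB θ r ^ 2 + (θ - 1) * sB θ r - r) = 0 := by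
    have : (2 * θ) ^ 2 * (θ * sB θ r ^ 2 + (θ - 1) * sB θ r - r)
        = θ * (2 * θ * sB θ r) ^ 2 + (θ - 1) * (2 * θ * sB θ r) * (2 * θ) - (2 * θ) ^ 2 * r := by
      ring
    rw [this, h2]; nlinarith [hsq]
  exact (mul_eq_zero.1 hscaled).resolve_left (by positivity)

theorem one_sub_lt_two_mul_mul_sB (hθ : 0 < θ) (hr : 0 < r) : 1 - θ < 2 * θ * sB θ r := by
  rw [two_mul_mul_sB hθ]
  linarith [sqrt_pos.2 (by positivity : (0 : ℝ) < 4 * θ * r + (1 - θ) ^ 2)]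

theorem sB_pos (hθ : 0 < θ) (hr : 0 < r) : 0 < sB θ r := by
  have h : |1 - θ| < √(4 * θ * r + (1 - θ) ^ 2) := by
    rw [← sqrt_sq_eq_abs]
    exact sqrt_lt_sqrt (by positivity) (by nlinarith)
  have : 0 < 2 * θ * sB θ r := by
    rw [two_mul_mul_sB hθ]; linarith [neg_abs_le (1 - θ)]
  nlinarith

/-- `sB θ r` is the larger root of `θ s² + (θ - 1) s - r`. -/
theorem quadratic_pos_of_sB_lt (hθ : 0 < θ) (hr : 0 < r) {s : ℝ} (hs : sB θ r < s) :
    0 < θ * s ^ 2 + (θ - 1) * s - r := by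
  have h0 := sB_quadratic_eq_zero hθ hr.le
  have h1 := one_sub_lt_two_mul_mul_sB hθ hr
  nlinarith [mul_pos (sub_pos.2 hs) (show 0 < θ * (s + sB θ r) + θ - 1 by nlinarith)]

end Quadratic

noncomputable def JmapDeriv (θ c0 c1 s : ℝ) : ℝ :=
  ((s + 1) / s) ^ (1 / θ) * (c1 - (c1 * s + c0) / (θ * s * (s + 1)))

section Jmap

variable {θ c0 c1 : ℝ}

theorem hasDerivAt_Jmap {s : ℝ} (hs : 0 < s) :
    HasDerivAt (Jmap θ c0 c1) (JmapDeriv θ c0 c1 s) s := by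
  have hu : 0 < (s + 1) / s := by positivity
  have hquot : HasDerivAt (fun s : ℝ => (s + 1) / s) (-1 / s ^ 2) s := by
    refine (((hasDerivAt_id s).add_const 1).div (hasDerivAt_id s) hs.ne').congr_deriv ?_
    simp only [id]; field_simp; ring
  have hlin : HasDerivAt (fun s : ℝ => c1 * s + c0) c1 s := by
    simpa using ((hasDerivAt_id s).const_mul c1).add_const c0
  refine (hlin.mul (hquot.rpow_const (p := 1 / θ) (Or.inl hu.ne'))).congr_deriv ?_
  unfold JmapDeriv
  rw [rpow_sub hu, rpow_one]
  field_simp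
  ring

theorem Jmap_pos (hc1 : 0 < c1) (hc0 : 0 < c0) {s : ℝ} (hs : 0 < s) : 0 < Jmap θ c0 c1 s := by
  unfold Jmap
  have : 0 < ((s + 1) / s) ^ (1 / θ) := rpow_pos_of_pos (by positivity) _
  positivity

theorem JmapDeriv_pos (hθ : 0 < θ) (hc1 : 0 < c1) (hc0 : 0 < c0) {s : ℝ}
    (hs : sB θ (c0 / c1) < s) : 0 < JmapDeriv θ c0 c1 s := by
  have hs0 : 0 < s := (sB_pos hθ (div_pos hc0 hc1)).trans hs
  have hq := quadratic_pos_of_sB_lt hθ (div_pos hc0 hc1) hs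
  have hc : c1 * (c0 / c1) = c0 := by field_simp
  have hlt : (c1 * s + c0) / (θ * s * (s + 1)) < c1 :=
    (div_lt_iff₀ (by positivity)).2 (by nlinarith)
  unfold JmapDeriv
  exact mul_pos (rpow_pos_of_pos (by positivity) _) (sub_pos.2 hlt)

theorem mul_JmapDeriv_lt_Jmap (hθ : 0 < θ) (hc1 : 0 < c1) (hc0 : 0 < c0) {s : ℝ} (hs : 0 < s) :
    s * JmapDeriv θ c0 c1 s < Jmap θ c0 c1 s := by
  have hdiff : Jmap θ c0 c1 s - s * JmapDeriv θ c0 c1 s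
      = ((s + 1) / s) ^ (1 / θ) * (c0 + (c1 * s + c0) / (θ * (s + 1))) := by
    unfold Jmap JmapDeriv; field_simp; ring
  have : 0 < ((s + 1) / s) ^ (1 / θ) * (c0 + (c1 * s + c0) / (θ * (s + 1))) :=
    mul_pos (rpow_pos_of_pos (by positivity) _) (by positivity)
  linarith

theorem strictMonoOn_Jmap (hθ : 0 < θ) (hc1 : 0 < c1) (hc0 : 0 < c0) :
    StrictMonoOn (Jmap θ c0 c1) (Ici (sB θ (c0 / c1))) := by
  have hsB := sB_pos hθ (div_pos hc0 hc1)
  refine strictMonoOn_of_deriv_pos (convex_Ici _) (fun s hs => ?_) fun s hs => ?_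
  · exact (hasDerivAt_Jmap (hsB.trans_le hs)).continuousAt.continuousWithinAt
  · rw [interior_Ici] at hs
    rw [(hasDerivAt_Jmap (hsB.trans hs)).deriv]
    exact JmapDeriv_pos hθ hc1 hc0 hs

theorem tendsto_Jmap_div_atTop : Tendsto (fun s => Jmap θ c0 c1 s / s) atTop (𝓝 c1) := by
  have hinv : Tendsto (fun s : ℝ => s⁻¹) atTop (𝓝 0) := tendsto_inv_atTop_zero
  have hlim : Tendsto (fun s : ℝ => (c1 + c0 * s⁻¹) * (1 + s⁻¹) ^ (1 / θ)) atTop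
      (𝓝 ((c1 + c0 * 0) * (1 + 0) ^ (1 / θ))) :=
    (tendsto_const_nhds.add (hinv.const_mul c0)).mul
      ((tendsto_const_nhds.add hinv).rpow_const (Or.inl (by norm_num)))
  rw [mul_zero, add_zero, add_zero, one_rpow, mul_one] at hlim
  refine hlim.congr' ?_
  filter_upwards [eventually_gt_atTop 0] with s hs
  unfold Jmap
  rw [add_div s 1 s, div_self hs.ne', one_div s]
  field_simp

theorem tendsto_log_sub_log_of_Jmap_comp_eq (hc1 : 0 < c1) {I : ℝ → ℝ}
    (hI : Tendsto I atTop atTop) (hJI : ∀ᶠ x in atTop, Jmap θ c0 c1 (I x) = x) :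
    Tendsto (fun x => log (I x) - log x) atTop (𝓝 (-log c1)) := by
  refine (((continuousAt_log hc1.ne').tendsto.comp
    (tendsto_Jmap_div_atTop (θ := θ) (c0 := c0))).neg.comp hI).congr' ?_
  filter_upwards [hJI, hI.eventually_gt_atTop 0, eventually_gt_atTop 0] with x hJx hIx hx
  simp only [Function.comp_apply, hJx]
  rw [log_div hx.ne' hIx.ne']
  ring

theorem inv_JmapDeriv_div_sub_inv_Jmap_nonneg (hθ : 0 < θ) (hc1 : 0 < c1) (hc0 : 0 < c0)
    {s : ℝ} (hs : sB θ (c0 / c1) < s) :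
    0 ≤ (JmapDeriv θ c0 c1 s)⁻¹ / s - 1 / Jmap θ c0 c1 s := by
  have hs0 : 0 < s := (sB_pos hθ (div_pos hc0 hc1)).trans hs
  rw [sub_nonneg, inv_div_left, ← one_div]
  exact one_div_le_one_div_of_le (mul_pos hs0 (JmapDeriv_pos hθ hc1 hc0 hs))
    (mul_JmapDeriv_lt_Jmap hθ hc1 hc0 hs0).le

end Jmap

/-- With `b := J(s_b)` and `I₁ : [b, ∞) → [s_b, ∞)` the inverse of the restriction
of `J` to `[s_b, ∞)`: `I₁` is differentiable on `(b, ∞)`, the improper integral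
`∫_b^∞ (I₁′(x)/I₁(x) − 1/x) dx` converges, and equals `log(b/(c1·s_b))`. -/
theorem stmt8 (θ c0 c1 : ℝ) (hθ : 0 < θ) (hc1 : 0 < c1) (hc01 : c1 < c0)
    (I1 : ℝ → ℝ)
    (hI1 : ∀ x, Jmap θ c0 c1 (sB θ (c0 / c1)) ≤ x →
      sB θ (c0 / c1) ≤ I1 x ∧ Jmap θ c0 c1 (I1 x) = x) :
    (∀ x, Jmap θ c0 c1 (sB θ (c0 / c1)) < x → DifferentiableAt ℝ I1 x) ∧
    IntegrableOn (fun x => deriv I1 x / I1 x - 1 / x)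
      (Set.Ioi (Jmap θ c0 c1 (sB θ (c0 / c1)))) ∧
    (∫ x in Set.Ioi (Jmap θ c0 c1 (sB θ (c0 / c1))), (deriv I1 x / I1 x - 1 / x))
      = Real.log (Jmap θ c0 c1 (sB θ (c0 / c1)) / (c1 * sB θ (c0 / c1))) := by
  have hc0 : 0 < c0 := hc1.trans hc01
  set sb := sB θ (c0 / c1)
  set b := Jmap θ c0 c1 sb
  have hsb : 0 < sb := sB_pos hθ (div_pos hc0 hc1)
  have hb : 0 < b := Jmap_pos hc1 hc0 hsb
  have hJ := strictMonoOn_Jmap hθ hc1 hc0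
  have hmaps : MapsTo I1 (Ici b) (Ici sb) := fun x hx => (hI1 x hx).1
  have hinv : RightInvOn I1 (Jmap θ c0 c1) (Ici b) := fun x hx => (hI1 x hx).2
  have hI1b : I1 b = sb := hJ.leftInvOn_of_rightInvOn_Ici hmaps hinv self_mem_Ici
  have hderiv : ∀ x ∈ Ioi b, HasDerivAt I1 (JmapDeriv θ c0 c1 (I1 x))⁻¹ x := fun x hx =>
    have hsx := hJ.lt_of_rightInvOn_Ici hmaps hinv hx
    hJ.hasDerivAt_of_rightInvOn_Ici hmaps hinv hx (hasDerivAt_Jmap (hsb.trans hsx))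
      (JmapDeriv_pos hθ hc1 hc0 hsx).ne'
  have hnonneg : ∀ x ∈ Ioi b, 0 ≤ deriv I1 x / I1 x - 1 / x := fun x hx => by
    have h := inv_JmapDeriv_div_sub_inv_Jmap_nonneg hθ hc1 hc0
      (hJ.lt_of_rightInvOn_Ici hmaps hinv hx)
    rwa [hinv (mem_Ici_of_Ioi hx), ← (hderiv x hx).deriv] at h
  have hlim : Tendsto (fun x => log (I1 x) - log x) atTop (𝓝 (-log c1)) :=
    tendsto_log_sub_log_of_Jmap_comp_eq hc1 (hJ.tendsto_atTop_of_rightInvOn_Ici hmaps hinv)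
      (eventually_ge_atTop b |>.mono fun _ hx => hinv hx)
  obtain ⟨hint, hval⟩ := integrableOn_Ioi_deriv_div_sub_inv hb
    (fun x hx => hsb.trans_le (hmaps hx)) (hJ.continuousWithinAt_Ici_of_rightInvOn_Ici hmaps hinv)
    (fun x hx => ((hderiv x hx).differentiableAt).hasDerivAt) hnonneg hlim
  refine ⟨fun x hx => (hderiv x hx).differentiableAt, hint, ?_⟩
  rw [hval, hI1b, log_div hb.ne' (by positivity), log_mul hc1.ne' hsb.ne']
  ring
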